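/- There exists a constant L > 0, depending only on B, R and C (and in particular independent of γ, f and r), such that for every γ > 0 and all z, Z, z', Z' ∈ ℝ^d with |z| ≤ C and |Z| ≤ C: |G(z', Z') − G(z, Z)| ≤ L(1 + e^{L/γ} + γ^{-1} e^{L/γ}) |z' − z| + L |Z' − Z|. -/

import Mathlib

/-!
Write `Λ(z) = log ∫_𝒜 exp((f·z + r)/γ)` and `μ_z = ∫_𝒜 π_z f` for the Gibbs mean of `f`.
Substituting `log π_z = (f·z + r)/γ - Λ(z)` gives `G(z, Z) = ⟪Z - z, μ_z⟫ + γ Λ(z)`, hence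
`G(z', Z') - G(z, Z)` equals
`⟪Z' - Z, μ_{z'}⟫ + ⟪Z - z, μ_{z'} - μ_z⟫ - ⟪z' - z, μ_{z'}⟫ + γ (Λ(z') - Λ(z))`.
The potentials at `z` and `z'` differ by at most `ε = B |z' - z| / γ`, so `|Λ(z') - Λ(z)| ≤ ε`
and `π_{z'} = π_z e^t` with `|t| ≤ 2ε`, whence `‖π_{z'} - π_z‖₁ ≤ 2ε e^{2ε}` (and always `≤ 2`).
Since `|μ_{z'} - μ_z| ≤ B ‖π_{z'} - π_z‖₁` and `|Z - z| ≤ 2C`, every term is bounded as claimed.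
-/

open MeasureTheory
open scoped RealInnerProductSpace

/-- The Gibbs probability density `π_z(a) ∝ exp((f(a)·z + r(a))/γ)` on the set `𝒜`. -/
noncomputable def gibbs {m d : ℕ} (𝒜 : Set (EuclideanSpace ℝ (Fin m))) (γ : ℝ)
    (f : EuclideanSpace ℝ (Fin m) → EuclideanSpace ℝ (Fin d))
    (r : EuclideanSpace ℝ (Fin m) → ℝ)
    (z : EuclideanSpace ℝ (Fin d)) (a : EuclideanSpace ℝ (Fin m)) : ℝ :=
  Real.exp ((⟪f a, z⟫ + r a) / γ) /
    ∫ a' in 𝒜, Real.exp ((⟪f a', z⟫ + r a') / γ)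

/-- `G(z,Z) = ∫_𝒜 (f(a)·Z + r(a) − γ log π_z(a)) π_z(a) da`. -/
noncomputable def gibbsG {m d : ℕ} (𝒜 : Set (EuclideanSpace ℝ (Fin m))) (γ : ℝ)
    (f : EuclideanSpace ℝ (Fin m) → EuclideanSpace ℝ (Fin d))
    (r : EuclideanSpace ℝ (Fin m) → ℝ)
    (z Z : EuclideanSpace ℝ (Fin d)) : ℝ :=
  ∫ a in 𝒜, (⟪f a, Z⟫ + r a - γ * Real.log (gibbs 𝒜 γ f r z a)) * gibbs 𝒜 γ f r z a

open Real

lemma abs_exp_sub_one_le_mul_exp_abs (t : ℝ) : |exp t - 1| ≤ |t| * exp |t| := by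
  rcases le_or_gt 0 t with ht | ht
  · rw [abs_of_nonneg ht, abs_of_nonneg (by simpa using one_le_exp ht)]
    nlinarith [add_one_le_exp (-t), exp_pos t, exp_neg t, mul_inv_cancel₀ (exp_pos t).ne']
  · rw [abs_of_neg ht, abs_of_nonpos (by simpa using exp_le_one_iff.mpr ht.le)]
    nlinarith [add_one_le_exp t, one_le_exp (neg_nonneg.mpr ht.le)]

section GibbsDensity

variable {α : Type*} [MeasurableSpace α] {μ : Measure α} {φ ψ : α → ℝ} {ε : ℝ}

noncomputable def gibbsDensity (μ : Measure α) (φ : α → ℝ) (a : α) : ℝ :=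
  exp (φ a) / ∫ a', exp (φ a') ∂μ

lemma gibbsDensity_nonneg (a : α) : 0 ≤ gibbsDensity μ φ a :=
  div_nonneg (exp_pos _).le (integral_nonneg fun _ => (exp_pos _).le)

lemma integrable_gibbsDensity (hφ : Integrable (fun a => exp (φ a)) μ) :
    Integrable (gibbsDensity μ φ) μ :=
  hφ.div_const _

lemma integral_gibbsDensity [NeZero μ] (hφ : Integrable (fun a => exp (φ a)) μ) :
    ∫ a, gibbsDensity μ φ a ∂μ = 1 := by
  simp only [gibbsDensity]
  rw [integral_div, div_self (integral_exp_pos hφ).ne']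

lemma integral_abs_gibbsDensity_sub_le_two [NeZero μ] (hφ : Integrable (fun a => exp (φ a)) μ)
    (hψ : Integrable (fun a => exp (ψ a)) μ) :
    ∫ a, |gibbsDensity μ φ a - gibbsDensity μ ψ a| ∂μ ≤ 2 := by
  have hφ' := integrable_gibbsDensity hφ
  have hψ' := integrable_gibbsDensity hψ
  calc ∫ a, |gibbsDensity μ φ a - gibbsDensity μ ψ a| ∂μ
      ≤ ∫ a, (gibbsDensity μ φ a + gibbsDensity μ ψ a) ∂μ := by
        refine integral_mono (hφ'.sub hψ').abs (hφ'.add hψ') fun a => ?_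
        have := abs_sub (gibbsDensity μ φ a) (gibbsDensity μ ψ a)
        rwa [abs_of_nonneg (gibbsDensity_nonneg a), abs_of_nonneg (gibbsDensity_nonneg a)] at this
    _ = 2 := by
        rw [integral_add hφ' hψ', integral_gibbsDensity hφ, integral_gibbsDensity hψ]
        norm_num

lemma log_integral_exp_le_of_ae_le [NeZero μ] (hφ : Integrable (fun a => exp (φ a)) μ)
    (hψ : Integrable (fun a => exp (ψ a)) μ) (h : ∀ᵐ a ∂μ, φ a ≤ ψ a + ε) :
    log (∫ a, exp (φ a) ∂μ) ≤ log (∫ a, exp (ψ a) ∂μ) + ε := by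
  have hle : ∫ a, exp (φ a) ∂μ ≤ (∫ a, exp (ψ a) ∂μ) * exp ε := by
    rw [← integral_mul_const]
    exact integral_mono_ae hφ (hψ.mul_const _)
      (h.mono fun a ha => by dsimp only; rw [← exp_add]; exact exp_le_exp.mpr ha)
  calc log (∫ a, exp (φ a) ∂μ) ≤ log ((∫ a, exp (ψ a) ∂μ) * exp ε) :=
        log_le_log (integral_exp_pos hφ) hle
    _ = log (∫ a, exp (ψ a) ∂μ) + ε := by
        rw [log_mul (integral_exp_pos hψ).ne' (exp_pos ε).ne', log_exp]

lemma abs_log_integral_exp_sub_le [NeZero μ] (hφ : Integrable (fun a => exp (φ a)) μ)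
    (hψ : Integrable (fun a => exp (ψ a)) μ) (h : ∀ᵐ a ∂μ, |φ a - ψ a| ≤ ε) :
    |log (∫ a, exp (φ a) ∂μ) - log (∫ a, exp (ψ a) ∂μ)| ≤ ε := by
  have hφψ := log_integral_exp_le_of_ae_le hφ hψ
    (h.mono fun a ha => by linarith [(abs_le.mp ha).2])
  have hψφ := log_integral_exp_le_of_ae_le hψ hφ
    (h.mono fun a ha => by linarith [(abs_le.mp ha).1])
  exact abs_sub_le_iff.mpr ⟨by linarith, by linarith⟩

lemma gibbsDensity_eq_mul_exp [NeZero μ] (hφ : Integrable (fun a => exp (φ a)) μ)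
    (hψ : Integrable (fun a => exp (ψ a)) μ) (a : α) :
    gibbsDensity μ φ a = gibbsDensity μ ψ a *
      exp (φ a - ψ a - (log (∫ a, exp (φ a) ∂μ) - log (∫ a, exp (ψ a) ∂μ))) := by
  have hZφ := integral_exp_pos hφ
  have hZψ := integral_exp_pos hψ
  rw [exp_sub, exp_sub, exp_sub, exp_log hZφ, exp_log hZψ, gibbsDensity, gibbsDensity]
  field_simp

lemma integral_abs_gibbsDensity_sub_le [NeZero μ] (hφ : Integrable (fun a => exp (φ a)) μ)
    (hψ : Integrable (fun a => exp (ψ a)) μ) (h : ∀ᵐ a ∂μ, |φ a - ψ a| ≤ ε) :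
    ∫ a, |gibbsDensity μ φ a - gibbsDensity μ ψ a| ∂μ ≤ 2 * ε * exp (2 * ε) := by
  have hψ' := integrable_gibbsDensity hψ
  have hlog := abs_log_integral_exp_sub_le hφ hψ h
  calc ∫ a, |gibbsDensity μ φ a - gibbsDensity μ ψ a| ∂μ
      ≤ ∫ a, gibbsDensity μ ψ a * (2 * ε * exp (2 * ε)) ∂μ := by
        refine integral_mono_ae ((integrable_gibbsDensity hφ).sub hψ').abs (hψ'.mul_const _)
          (h.mono fun a ha => ?_)
        set t := φ a - ψ a - (log (∫ a, exp (φ a) ∂μ) - log (∫ a, exp (ψ a) ∂μ))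
        have ht : |t| ≤ 2 * ε := (abs_sub _ _).trans (by linarith)
        dsimp only
        rw [gibbsDensity_eq_mul_exp hφ hψ a, ← mul_sub_one, abs_mul,
          abs_of_nonneg (gibbsDensity_nonneg a)]
        refine mul_le_mul_of_nonneg_left ?_ (gibbsDensity_nonneg a)
        exact (abs_exp_sub_one_le_mul_exp_abs t).trans
          (mul_le_mul ht (exp_le_exp.mpr ht) (exp_pos _).le ((abs_nonneg t).trans ht))
    _ = 2 * ε * exp (2 * ε) := by rw [integral_mul_const, integral_gibbsDensity hψ, one_mul]

lemma norm_integral_smul_le {E : Type*} [NormedAddCommGroup E] [NormedSpace ℝ E]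
    {h : α → ℝ} {g : α → E} {B : ℝ} (hh : Integrable h μ) (hg : ∀ᵐ a ∂μ, ‖g a‖ ≤ B) :
    ‖∫ a, h a • g a ∂μ‖ ≤ B * ∫ a, |h a| ∂μ := by
  rw [← integral_const_mul]
  refine norm_integral_le_of_norm_le (hh.abs.const_mul B) (hg.mono fun a ha => ?_)
  rw [norm_smul, Real.norm_eq_abs, mul_comm]
  exact mul_le_mul_of_nonneg_right ha (abs_nonneg _)

end GibbsDensity

section Gibbs

variable {m d : ℕ} {𝒜 : Set (EuclideanSpace ℝ (Fin m))} {γ B : ℝ}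
  {f : EuclideanSpace ℝ (Fin m) → EuclideanSpace ℝ (Fin d)} {r : EuclideanSpace ℝ (Fin m) → ℝ}

noncomputable def gibbsMean (𝒜 : Set (EuclideanSpace ℝ (Fin m))) (γ : ℝ)
    (f : EuclideanSpace ℝ (Fin m) → EuclideanSpace ℝ (Fin d))
    (r : EuclideanSpace ℝ (Fin m) → ℝ) (z : EuclideanSpace ℝ (Fin d)) :
    EuclideanSpace ℝ (Fin d) :=
  ∫ a in 𝒜, gibbs 𝒜 γ f r z a • f a

noncomputable def logPartition (𝒜 : Set (EuclideanSpace ℝ (Fin m))) (γ : ℝ)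
    (f : EuclideanSpace ℝ (Fin m) → EuclideanSpace ℝ (Fin d))
    (r : EuclideanSpace ℝ (Fin m) → ℝ) (z : EuclideanSpace ℝ (Fin d)) : ℝ :=
  log (∫ a in 𝒜, exp ((⟪f a, z⟫ + r a) / γ))

lemma gibbs_eq_gibbsDensity (z : EuclideanSpace ℝ (Fin d)) :
    gibbs 𝒜 γ f r z = gibbsDensity (volume.restrict 𝒜) fun a => (⟪f a, z⟫ + r a) / γ :=
  rfl

lemma integrable_gibbs {z : EuclideanSpace ℝ (Fin d)}
    (hE : IntegrableOn (fun a => exp ((⟪f a, z⟫ + r a) / γ)) 𝒜) :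
    Integrable (gibbs 𝒜 γ f r z) (volume.restrict 𝒜) := by
  rw [gibbs_eq_gibbsDensity]
  exact integrable_gibbsDensity hE

lemma integrableOn_exp_potential {R : ℝ} (h𝒜 : volume 𝒜 < ⊤) (hfm : Measurable f)
    (hrm : Measurable r) (hf : ∀ᵐ a ∂volume.restrict 𝒜, ‖f a‖ ≤ B)
    (hr : ∀ᵐ a ∂volume.restrict 𝒜, |r a| ≤ R) (z : EuclideanSpace ℝ (Fin d)) :
    IntegrableOn (fun a => exp ((⟪f a, z⟫ + r a) / γ)) 𝒜 := by
  refine IntegrableOn.of_bound h𝒜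
    (hfm.inner_const.add hrm |>.div_const γ |>.exp).aestronglyMeasurable
    (exp ((B * ‖z‖ + R) / |γ|)) ((hf.and hr).mono fun a ⟨hfa, hra⟩ => ?_)
  have hinner : |⟪f a, z⟫| ≤ B * ‖z‖ :=
    (abs_real_inner_le_norm _ _).trans (mul_le_mul_of_nonneg_right hfa (norm_nonneg z))
  rw [Real.norm_eq_abs, abs_of_pos (exp_pos _), exp_le_exp]
  calc (⟪f a, z⟫ + r a) / γ ≤ |(⟪f a, z⟫ + r a) / γ| := le_abs_self _
    _ ≤ (B * ‖z‖ + R) / |γ| := by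
        rw [abs_div]
        gcongr
        exact (abs_add_le _ _).trans (add_le_add hinner hra)

lemma abs_potential_sub_le (hγ : 0 < γ) (hf : ∀ᵐ a ∂volume.restrict 𝒜, ‖f a‖ ≤ B)
    (z z' : EuclideanSpace ℝ (Fin d)) :
    ∀ᵐ a ∂volume.restrict 𝒜,
      |(⟪f a, z'⟫ + r a) / γ - (⟪f a, z⟫ + r a) / γ| ≤ B * ‖z' - z‖ / γ :=
  hf.mono fun a ha => by
    rw [← sub_div, add_sub_add_right_eq_sub, ← inner_sub_right, abs_div, abs_of_pos hγ]
    gcongr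
    exact (abs_real_inner_le_norm _ _).trans (mul_le_mul_of_nonneg_right ha (norm_nonneg _))

lemma norm_gibbsMean_sub_le (hfm : Measurable f) (hf : ∀ᵐ a ∂volume.restrict 𝒜, ‖f a‖ ≤ B)
    {z z' : EuclideanSpace ℝ (Fin d)}
    (hE : IntegrableOn (fun a => exp ((⟪f a, z⟫ + r a) / γ)) 𝒜)
    (hE' : IntegrableOn (fun a => exp ((⟪f a, z'⟫ + r a) / γ)) 𝒜) :
    ‖gibbsMean 𝒜 γ f r z' - gibbsMean 𝒜 γ f r z‖
      ≤ B * ∫ a in 𝒜, |gibbs 𝒜 γ f r z' a - gibbs 𝒜 γ f r z a| := by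
  have hπ' := integrable_gibbs hE'
  have hπ := integrable_gibbs hE
  have hπ'f : Integrable (fun a => gibbs 𝒜 γ f r z' a • f a) (volume.restrict 𝒜) :=
    hπ'.smul_bdd B hfm.aestronglyMeasurable hf
  have hπf : Integrable (fun a => gibbs 𝒜 γ f r z a • f a) (volume.restrict 𝒜) :=
    hπ.smul_bdd B hfm.aestronglyMeasurable hf
  rw [gibbsMean, gibbsMean, ← integral_sub hπ'f hπf]
  simp_rw [← sub_smul]
  exact norm_integral_smul_le (hπ'.sub hπ) hf

variable [NeZero (volume.restrict 𝒜)]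

lemma integral_gibbs {z : EuclideanSpace ℝ (Fin d)}
    (hE : IntegrableOn (fun a => exp ((⟪f a, z⟫ + r a) / γ)) 𝒜) :
    ∫ a in 𝒜, gibbs 𝒜 γ f r z a = 1 := by
  rw [gibbs_eq_gibbsDensity]
  exact integral_gibbsDensity hE

lemma gibbsG_eq (hγ : γ ≠ 0) (hfm : Measurable f) (hf : ∀ᵐ a ∂volume.restrict 𝒜, ‖f a‖ ≤ B)
    {z : EuclideanSpace ℝ (Fin d)} (hE : IntegrableOn (fun a => exp ((⟪f a, z⟫ + r a) / γ)) 𝒜)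
    (Z : EuclideanSpace ℝ (Fin d)) :
    gibbsG 𝒜 γ f r z Z = ⟪Z - z, gibbsMean 𝒜 γ f r z⟫ + γ * logPartition 𝒜 γ f r z := by
  have hπ := integrable_gibbs hE
  have hπf : Integrable (fun a => gibbs 𝒜 γ f r z a • f a) (volume.restrict 𝒜) :=
    hπ.smul_bdd B hfm.aestronglyMeasurable hf
  have hpoint : ∀ a, (⟪f a, Z⟫ + r a - γ * log (gibbs 𝒜 γ f r z a)) * gibbs 𝒜 γ f r z a
      = ⟪Z - z, gibbs 𝒜 γ f r z a • f a⟫ + γ * logPartition 𝒜 γ f r z * gibbs 𝒜 γ f r z a := by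
    intro a
    rw [gibbs, log_div (exp_pos _).ne' (integral_exp_pos hE).ne', log_exp, ← gibbs,
      inner_smul_right, inner_sub_left, real_inner_comm Z, real_inner_comm z, logPartition]
    field_simp
    ring
  rw [gibbsG, funext hpoint, integral_add (hπf.const_inner _) (hπ.const_mul _),
    integral_inner hπf, integral_const_mul, integral_gibbs hE, mul_one, gibbsMean]

lemma norm_gibbsMean_le (hf : ∀ᵐ a ∂volume.restrict 𝒜, ‖f a‖ ≤ B)
    {z : EuclideanSpace ℝ (Fin d)} (hE : IntegrableOn (fun a => exp ((⟪f a, z⟫ + r a) / γ)) 𝒜) :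
    ‖gibbsMean 𝒜 γ f r z‖ ≤ B := by
  have h := norm_integral_smul_le (integrable_gibbs hE) hf
  simp_rw [gibbs_eq_gibbsDensity, abs_of_nonneg (gibbsDensity_nonneg _),
    integral_gibbsDensity hE, mul_one] at h
  exact h

lemma abs_logPartition_sub_le (hγ : 0 < γ) (hf : ∀ᵐ a ∂volume.restrict 𝒜, ‖f a‖ ≤ B)
    {z z' : EuclideanSpace ℝ (Fin d)}
    (hE : IntegrableOn (fun a => exp ((⟪f a, z⟫ + r a) / γ)) 𝒜)
    (hE' : IntegrableOn (fun a => exp ((⟪f a, z'⟫ + r a) / γ)) 𝒜) :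
    |logPartition 𝒜 γ f r z' - logPartition 𝒜 γ f r z| ≤ B * ‖z' - z‖ / γ :=
  abs_log_integral_exp_sub_le hE' hE (abs_potential_sub_le hγ hf z z')

lemma integral_abs_gibbs_sub_le (hγ : 0 < γ) (hB : 0 ≤ B)
    (hf : ∀ᵐ a ∂volume.restrict 𝒜, ‖f a‖ ≤ B) {z z' : EuclideanSpace ℝ (Fin d)}
    (hE : IntegrableOn (fun a => exp ((⟪f a, z⟫ + r a) / γ)) 𝒜)
    (hE' : IntegrableOn (fun a => exp ((⟪f a, z'⟫ + r a) / γ)) 𝒜) :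
    ∫ a in 𝒜, |gibbs 𝒜 γ f r z' a - gibbs 𝒜 γ f r z a|
      ≤ (2 + 2 * B * γ⁻¹ * exp (2 * B / γ)) * ‖z' - z‖ := by
  have hexp : 0 ≤ 2 * B * γ⁻¹ * exp (2 * B / γ) * ‖z' - z‖ := by positivity
  rcases le_or_gt ‖z' - z‖ 1 with hδ | hδ
  · have hε : B * ‖z' - z‖ / γ ≤ B / γ := by gcongr; exact mul_le_of_le_one_right hB hδ
    calc ∫ a in 𝒜, |gibbs 𝒜 γ f r z' a - gibbs 𝒜 γ f r z a|
        ≤ 2 * (B * ‖z' - z‖ / γ) * exp (2 * (B * ‖z' - z‖ / γ)) :=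
          integral_abs_gibbsDensity_sub_le hE' hE (abs_potential_sub_le hγ hf z z')
      _ ≤ 2 * (B * ‖z' - z‖ / γ) * exp (2 * B / γ) := by
          rw [mul_div_assoc 2 B γ]
          gcongr
      _ ≤ (2 + 2 * B * γ⁻¹ * exp (2 * B / γ)) * ‖z' - z‖ := by
          rw [div_eq_mul_inv]
          nlinarith [norm_nonneg (z' - z)]
  · have hT : ∫ a in 𝒜, |gibbs 𝒜 γ f r z' a - gibbs 𝒜 γ f r z a| ≤ 2 :=
      integral_abs_gibbsDensity_sub_le_two hE' hE
    linarith

lemma abs_gibbsG_sub_le (hγ : 0 < γ) (hfm : Measurable f)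
    (hf : ∀ᵐ a ∂volume.restrict 𝒜, ‖f a‖ ≤ B)
    (hE : ∀ w, IntegrableOn (fun a => exp ((⟪f a, w⟫ + r a) / γ)) 𝒜)
    (z Z z' Z' : EuclideanSpace ℝ (Fin d)) :
    |gibbsG 𝒜 γ f r z' Z' - gibbsG 𝒜 γ f r z Z| ≤ B * ‖Z' - Z‖
      + B * ‖Z - z‖ * (∫ a in 𝒜, |gibbs 𝒜 γ f r z' a - gibbs 𝒜 γ f r z a|)
      + 2 * B * ‖z' - z‖ := by
  set μ' := gibbsMean 𝒜 γ f r z'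
  set μ := gibbsMean 𝒜 γ f r z
  have hsplit : gibbsG 𝒜 γ f r z' Z' - gibbsG 𝒜 γ f r z Z
      = ⟪Z' - Z, μ'⟫ + ⟪Z - z, μ' - μ⟫ - ⟪z' - z, μ'⟫
        + γ * (logPartition 𝒜 γ f r z' - logPartition 𝒜 γ f r z) := by
    rw [gibbsG_eq hγ.ne' hfm hf (hE z'), gibbsG_eq hγ.ne' hfm hf (hE z)]
    simp only [inner_sub_left, inner_sub_right]
    ring
  have hμ' : ‖μ'‖ ≤ B := norm_gibbsMean_le hf (hE z')
  have hlog : |γ * (logPartition 𝒜 γ f r z' - logPartition 𝒜 γ f r z)| ≤ B * ‖z' - z‖ := by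
    rw [abs_mul, abs_of_pos hγ, ← le_div_iff₀' hγ]
    exact abs_logPartition_sub_le hγ hf (hE z) (hE z')
  have h1 : |⟪Z' - Z, μ'⟫| ≤ B * ‖Z' - Z‖ :=
    (abs_real_inner_le_norm _ _).trans (by rw [mul_comm]; gcongr)
  have h2 : |⟪Z - z, μ' - μ⟫|
      ≤ B * ‖Z - z‖ * ∫ a in 𝒜, |gibbs 𝒜 γ f r z' a - gibbs 𝒜 γ f r z a| :=
    (abs_real_inner_le_norm _ _).trans <| by
      rw [mul_comm B, mul_assoc]
      gcongr
      exact norm_gibbsMean_sub_le hfm hf (hE z) (hE z')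
  have h3 : |⟪z' - z, μ'⟫| ≤ B * ‖z' - z‖ :=
    (abs_real_inner_le_norm _ _).trans (by rw [mul_comm]; gcongr)
  rw [hsplit]
  refine (abs_add_le _ _).trans ?_
  have := abs_sub (⟪Z' - Z, μ'⟫ + ⟪Z - z, μ' - μ⟫) ⟪z' - z, μ'⟫
  have := abs_add_le ⟪Z' - Z, μ'⟫ ⟪Z - z, μ' - μ⟫
  linarith

end Gibbs

theorem stmt2_general (B R C : ℝ) (hB : 0 < B) (hC : 0 < C) :
    ∃ L > 0, ∀ (m d : ℕ) (𝒜 : Set (EuclideanSpace ℝ (Fin m))),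
      IsCompact 𝒜 → 0 < volume 𝒜 → volume 𝒜 < ⊤ →
      ∀ γ : ℝ, 0 < γ →
      ∀ (f : EuclideanSpace ℝ (Fin m) → EuclideanSpace ℝ (Fin d))
        (r : EuclideanSpace ℝ (Fin m) → ℝ),
        Measurable f → Measurable r →
        (∀ a ∈ 𝒜, ‖f a‖ ≤ B) → (∀ a ∈ 𝒜, |r a| ≤ R) →
      ∀ z Z z' Z' : EuclideanSpace ℝ (Fin d), ‖z‖ ≤ C → ‖Z‖ ≤ C →
        |gibbsG 𝒜 γ f r z' Z' - gibbsG 𝒜 γ f r z Z| ≤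
          L * (1 + Real.exp (L / γ) + γ⁻¹ * Real.exp (L / γ)) * ‖z' - z‖ +
            L * ‖Z' - Z‖ := by
  refine ⟨2 * B + 4 * B * C + 4 * B ^ 2 * C, by positivity, ?_⟩
  intro m d 𝒜 h𝒜 hvol0 hvol γ hγ f r hfm hrm hfB hrR z Z z' Z' hz hZ
  have h𝒜m : MeasurableSet 𝒜 := h𝒜.measurableSet
  have : NeZero (volume.restrict 𝒜) := ⟨by simpa [Measure.restrict_eq_zero] using hvol0.ne'⟩
  have hf := ae_restrict_of_forall_mem (μ := volume) h𝒜m hfB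
  have hE := integrableOn_exp_potential (γ := γ) hvol hfm hrm hf
    (ae_restrict_of_forall_mem (μ := volume) h𝒜m hrR)
  have hT := integral_abs_gibbs_sub_le hγ hB.le hf (hE z) (hE z')
  have hZz : ‖Z - z‖ ≤ 2 * C := (norm_sub_le _ _).trans (by linarith)
  set L := 2 * B + 4 * B * C + 4 * B ^ 2 * C
  have hexp : exp (2 * B / γ) ≤ exp (L / γ) := by gcongr; nlinarith [mul_pos hB hC]
  refine (abs_gibbsG_sub_le hγ hfm hf hE z Z z' Z').trans ?_
  have hδ : (2 * B + 4 * B * C) * ‖z' - z‖ ≤ L * ‖z' - z‖ := by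
    gcongr; simp only [L]; nlinarith [mul_pos hB hC]
  have hε : B * ‖Z' - Z‖ ≤ L * ‖Z' - Z‖ := by gcongr; simp only [L]; nlinarith [mul_pos hB hC]
  have hγδ : 4 * B ^ 2 * C * (γ⁻¹ * exp (2 * B / γ) * ‖z' - z‖)
      ≤ L * (γ⁻¹ * exp (L / γ) * ‖z' - z‖) := by
    gcongr
    simp only [L]; nlinarith [mul_pos hB hC]
  have hexpδ : 0 ≤ L * (exp (L / γ) * ‖z' - z‖) := by positivity
  calc _ ≤ B * ‖Z' - Z‖ + B * (2 * C) * ((2 + 2 * B * γ⁻¹ * exp (2 * B / γ)) * ‖z' - z‖)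
        + 2 * B * ‖z' - z‖ := by gcongr
    _ ≤ _ := by linarith

/-- Lipschitz property of `G`: the Lipschitz constant `L` depends only on
`B`, `R` and `C`, and in particular not on `γ`, `f` or `r`. -/
theorem stmt2 (B R C : ℝ) (hB : 0 < B) (hR : 0 < R) (hC : 0 < C) :
    ∃ L > 0, ∀ (m d : ℕ) (𝒜 : Set (EuclideanSpace ℝ (Fin m))),
      IsCompact 𝒜 → 0 < volume 𝒜 → volume 𝒜 < ⊤ →
      ∀ γ : ℝ, 0 < γ →
      ∀ (f : EuclideanSpace ℝ (Fin m) → EuclideanSpace ℝ (Fin d))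
        (r : EuclideanSpace ℝ (Fin m) → ℝ),
        Measurable f → Measurable r →
        (∀ a ∈ 𝒜, ‖f a‖ ≤ B) → (∀ a ∈ 𝒜, |r a| ≤ R) →
      ∀ z Z z' Z' : EuclideanSpace ℝ (Fin d), ‖z‖ ≤ C → ‖Z‖ ≤ C →
        |gibbsG 𝒜 γ f r z' Z' - gibbsG 𝒜 γ f r z Z| ≤
          L * (1 + Real.exp (L / γ) + γ⁻¹ * Real.exp (L / γ)) * ‖z' - z‖ +
            L * ‖Z' - Z‖ :=
  stmt2_general B R C hB hC
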